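/- arXiv:1807.08082 — 2 statements merged into one kernel-verified Lean document; each statement's English description precedes it below -/
import Mathlib

section
/- Let (G,c) be a circularly-ordered group and g ∈ G \ {id}. Suppose c_α and c_β are circular orderings on G satisfying f_{c_α}(a,b) = f_{c_β}(gag⁻¹, gbg⁻¹) for all a,b ∈ G, and d_α, d_β : G → ℤ are functions with f_c(a,b) − f_{c_α}(a,b) = d_α(a) + d_α(b) − d_α(ab) and likewise for β. Then the map φ : G → ℤ given by φ(a) = −1 + f_c(g,a) + f_c(ga,g⁻¹) + d_β(gag⁻¹) − d_α(a) is a group homomorphism. -/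
open scoped Classical

noncomputable section

/-- A (left-invariant) circular ordering on a group `G`, as an orientation cocycle. -/
def IsCircularOrdering {G : Type*} [Group G] (c : G → G → G → ℤ) : Prop :=
  (∀ a b d : G, c a b d = 0 ↔ a = b ∨ b = d ∨ a = d) ∧
  (∀ a b d : G, c a b d = 1 ∨ c a b d = 0 ∨ c a b d = -1) ∧
  (∀ a₁ a₂ a₃ a₄ : G, c a₂ a₃ a₄ - c a₁ a₃ a₄ + c a₁ a₂ a₄ - c a₁ a₂ a₃ = 0) ∧
  (∀ g a₁ a₂ a₃ : G, c (g * a₁) (g * a₂) (g * a₃) = c a₁ a₂ a₃)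

/-- The normalized 2-cocycle `f_c` associated to a circular ordering `c`:
`f_c a b = 0` if `a = 1` or `b = 1` or `c 1 a (a*b) = 1`, and `1` otherwise
(i.e. when `a*b = 1` with `a ≠ 1`, or `c 1 (a*b) a = 1`). -/
def fc {G : Type*} [Group G] (c : G → G → G → ℤ) (a b : G) : ℤ :=
  if a = 1 ∨ b = 1 ∨ c 1 a (a * b) = 1 then 0 else 1

lemma fc_one_left {G : Type*} [Group G] (c : G → G → G → ℤ) (b : G) : fc c 1 b = 0 := by
  simp [fc]

lemma fc_one_right {G : Type*} [Group G] (c : G → G → G → ℤ) (a : G) : fc c a 1 = 0 := by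
  simp [fc]

lemma fc_cocycle {G : Type*} [Group G] {c : G → G → G → ℤ} (hc : IsCircularOrdering c)
    (a b d : G) : fc c a b + fc c (a * b) d = fc c b d + fc c a (b * d) := by
  obtain ⟨hz, hr, hco, hinv⟩ := hc
  by_cases ha : a = 1
  · subst ha; simp [fc_one_left]
  by_cases hb : b = 1
  · subst hb; simp [fc_one_right, fc_one_left]
  by_cases hd : d = 1
  · subst hd; simp [fc_one_right]
  have key : c 1 b (b * d) - c 1 (a * b) (a * (b * d)) + c 1 a (a * (b * d))
      - c 1 a (a * b) = 0 := by
    have h := hco 1 a (a * b) (a * b * d)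
    have h2 := hinv a 1 b (b * d)
    rw [mul_one, ← mul_assoc] at h2
    simp only [mul_assoc] at h h2
    linarith [h, h2]
  have z1 : c 1 a (a * b) = 0 ↔ a * b = 1 := by
    rw [hz]
    constructor
    · rintro (h | h | h)
      · exact absurd h.symm ha
      · exact absurd (left_eq_mul.mp h) hb
      · exact h.symm
    · intro h; exact Or.inr (Or.inr h.symm)
  have z2 : c 1 (a * b) (a * (b * d)) = 0 ↔ (a * b = 1 ∨ a * (b * d) = 1) := by
    rw [← mul_assoc, hz]
    constructor
    · rintro (h | h | h)
      · exact Or.inl h.symm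
      · exact absurd (left_eq_mul.mp h) hd
      · exact Or.inr h.symm
    · rintro (h | h)
      · exact Or.inl h.symm
      · exact Or.inr (Or.inr h.symm)
  have z3 : c 1 b (b * d) = 0 ↔ b * d = 1 := by
    rw [hz]
    constructor
    · rintro (h | h | h)
      · exact absurd h.symm hb
      · exact absurd (left_eq_mul.mp h) hd
      · exact h.symm
    · intro h; exact Or.inr (Or.inr h.symm)
  have z4 : c 1 a (a * (b * d)) = 0 ↔ (b * d = 1 ∨ a * (b * d) = 1) := by
    rw [hz]
    constructor
    · rintro (h | h | h)
      · exact absurd h.symm ha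
      · exact Or.inl (left_eq_mul.mp h)
      · exact Or.inr h.symm
    · rintro (h | h)
      · exact Or.inr (Or.inl (by rw [h, mul_one]))
      · exact Or.inr (Or.inr h.symm)
  have e1 : fc c a b = if c 1 a (a * b) = 1 then 0 else 1 := by simp [fc, ha, hb]
  have e2 : fc c (a * b) d = if a * b = 1 ∨ c 1 (a * b) (a * (b * d)) = 1 then 0 else 1 := by
    simp [fc, hd, mul_assoc]
  have e3 : fc c b d = if c 1 b (b * d) = 1 then 0 else 1 := by simp [fc, hb, hd]
  have e4 : fc c a (b * d) = if b * d = 1 ∨ c 1 a (a * (b * d)) = 1 then 0 else 1 := by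
    simp [fc, ha]
  rw [e1, e2, e3, e4]
  have r1 := hr 1 a (a * b)
  have r2 := hr 1 (a * b) (a * (b * d))
  have r3 := hr 1 b (b * d)
  have r4 := hr 1 a (a * (b * d))
  by_cases hP : a * b = 1 <;> by_cases hQ : b * d = 1 <;> by_cases hR : a * (b * d) = 1 <;>
      simp only [hP, hQ, hR, z1, z2, z3, z4, true_or, or_true, false_or, or_false,
        iff_true, iff_false] at * <;>
    split_ifs <;> omega

lemma fc_inv_self {G : Type*} [Group G] {c : G → G → G → ℤ} (hc : IsCircularOrdering c)
    {g : G} (hg : g ≠ 1) : fc c g⁻¹ g = 1 := by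
  have h0 : c 1 g⁻¹ (g⁻¹ * g) = 0 := by
    rw [inv_mul_cancel]
    exact (hc.1 1 g⁻¹ 1).mpr (Or.inr (Or.inr rfl))
  rw [fc, if_neg]
  push_neg
  exact ⟨by simpa using hg, hg, by omega⟩

/-- The map `φ(a) = -1 + f_c(g,a) + f_c(ga,g⁻¹) + d_β(gag⁻¹) - d_α(a)` is a homomorphism. -/
theorem stmt12 {G : Type*} [Group G] (c cα cβ : G → G → G → ℤ)
    (hc : IsCircularOrdering c) (hcα : IsCircularOrdering cα) (hcβ : IsCircularOrdering cβ)
    (g : G) (hg : g ≠ 1)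
    (hconj : ∀ a b : G, fc cα a b = fc cβ (g * a * g⁻¹) (g * b * g⁻¹))
    (dα dβ : G → ℤ)
    (hdα : ∀ a b : G, fc c a b - fc cα a b = dα a + dα b - dα (a * b))
    (hdβ : ∀ a b : G, fc c a b - fc cβ a b = dβ a + dβ b - dβ (a * b)) :
    ∀ a b : G,
      (-1 + fc c g (a * b) + fc c (g * (a * b)) g⁻¹ + dβ (g * (a * b) * g⁻¹) - dα (a * b)) =
        (-1 + fc c g a + fc c (g * a) g⁻¹ + dβ (g * a * g⁻¹) - dα a) +
          (-1 + fc c g b + fc c (g * b) g⁻¹ + dβ (g * b * g⁻¹) - dα b) := by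
  intro a b
  have fcoc := fc_cocycle hc
  have B1 : fc c g⁻¹ g = 1 := fc_inv_self hc hg
  have A1 := fcoc (g * a) g⁻¹ g
  have A2 := fcoc (g * a * g⁻¹) g (b * g⁻¹)
  have A3 := fcoc (g * a) b g⁻¹
  have A4 := fcoc g a b
  have A5 := fcoc g b g⁻¹
  have Hα := hdα a b
  have Hβ := hdβ (g * a * g⁻¹) (g * b * g⁻¹)
  have Hc := hconj a b
  simp only [mul_assoc, inv_mul_cancel, mul_inv_cancel, mul_one, one_mul,
    inv_mul_cancel_left, mul_inv_cancel_left, fc_one_right, fc_one_left, B1]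
    at A1 A2 A3 A4 A5 Hα Hβ Hc ⊢
  linarith [A1, A2, A3, A4, A5, Hα, Hβ, Hc]
end
end

section
/- Let (G,c) be a circularly-ordered group and H ⊂ G a proper convex subgroup. Let (G̃, <_c, z_c) be the lift of (G,c) and define ι : H → G̃ by ι(h) = (−d(h), h), where d : H → ℤ is the function with d(id) = 0, d(h) = 0 for h in the positive cone of the restricted left ordering and d(h) = 1 otherwise. Then ι is an injective group homomorphism and its image is a convex subgroup of (G̃, <_c): if id <_c g̃ <_c h̃ with h̃ ∈ ι(H), then g̃ ∈ ι(H). -/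
open scoped Classical

noncomputable section

/-- Multiplication of the lift `G̃ = ℤ × G`: `(n,a)(m,b) = (n+m+f_c(a,b), ab)`. -/
def mulT {G : Type*} [Group G] (c : G → G → G → ℤ) (p q : ℤ × G) : ℤ × G :=
  (p.1 + q.1 + fc c p.2 q.2, p.2 * q.2)

/-- Inversion in the lift: `(n,a)⁻¹ = (-n - f_c(a,a⁻¹), a⁻¹)`. -/
def invT {G : Type*} [Group G] (c : G → G → G → ℤ) (p : ℤ × G) : ℤ × G :=
  (-p.1 - fc c p.2 p.2⁻¹, p.2⁻¹)

/-- The positive cone `{(n,a) : n ≥ 0} \ {(0,1)}` of the lift. -/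
def posT (G : Type*) [Group G] : Set (ℤ × G) := {p | 0 ≤ p.1 ∧ p ≠ (0, 1)}

/-- The left ordering `<_c` of the lift: `p < q` iff `p⁻¹ q` lies in the positive cone. -/
def ltT {G : Type*} [Group G] (c : G → G → G → ℤ) (p q : ℤ × G) : Prop :=
  mulT c (invT c p) q ∈ posT G

/-- The positive cone on a convex subgroup `H` of `(G,c)`:
`P = {h ∈ H : c(1,h,g) = 1 for some g ∈ G \ H}`. -/
def posCone {G : Type*} [Group G] (c : G → G → G → ℤ) (H : Subgroup G) : Set G :=
  {h : G | h ∈ H ∧ ∃ g : G, g ∉ H ∧ c 1 h g = 1}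

/-- The function `d : H → ℤ` with `d(1) = 0`, `d(h) = 0` for `h ∈ P`, `d(h) = 1` otherwise. -/
def dConv {G : Type*} [Group G] (c : G → G → G → ℤ) (H : Subgroup G) (h : G) : ℤ :=
  if h = 1 ∨ h ∈ posCone c H then 0 else 1

section Stmt16Aux

variable {G : Type*} [Group G] {c : G → G → G → ℤ}

private lemma deg (hc : IsCircularOrdering c) {a b d : G} (h : a = b ∨ b = d ∨ a = d) :
    c a b d = 0 := (hc.1 a b d).mpr h

private lemma swap12 (hc : IsCircularOrdering c) (a b d : G) : c b a d = -c a b d := by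
  have h := hc.2.2.1 a b a d
  have h1 : c a a d = 0 := deg hc (Or.inl rfl)
  have h2 : c a b a = 0 := deg hc (Or.inr (Or.inr rfl))
  omega

private lemma swap23 (hc : IsCircularOrdering c) (a b d : G) : c a d b = -c a b d := by
  have h := hc.2.2.1 a b d b
  have h1 : c b d b = 0 := deg hc (Or.inr (Or.inr rfl))
  have h2 : c a b b = 0 := deg hc (Or.inr (Or.inl rfl))
  omega

private lemma cyc (hc : IsCircularOrdering c) (a b d : G) : c b d a = c a b d := by
  have h1 := swap12 hc d b a
  have h2 := swap23 hc d a b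
  have h3 := swap12 hc a d b
  have h4 := swap23 hc a b d
  omega

private lemma ctrans (hc : IsCircularOrdering c) (x a y b : G)
    (h1 : c x a y = 1) (h2 : c x y b = 1) : c x a b = 1 := by
  have h := hc.2.2.1 x a y b
  have v1 := hc.2.1 a y b
  have v2 := hc.2.1 x a b
  omega

private lemma distinct (hc : IsCircularOrdering c) {a b d : G} (h : c a b d = 1) :
    a ≠ b ∧ b ≠ d ∧ a ≠ d := by
  have h0 := hc.1 a b d
  have hne : ¬(a = b ∨ b = d ∨ a = d) := fun e => by rw [h0.mpr e] at h; omega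
  push_neg at hne
  exact hne

private lemma cne (hc : IsCircularOrdering c) {a b d : G}
    (h1 : a ≠ b) (h2 : b ≠ d) (h3 : a ≠ d) : c a b d = 1 ∨ c a b d = -1 := by
  have hv := hc.2.1 a b d
  have h0 : c a b d ≠ 0 := fun e => by
    rcases (hc.1 a b d).mp e with e | e | e <;> contradiction
  omega

private lemma fc_shift (hc : IsCircularOrdering c) (a b : G) :
    c 1 a (a * b) = c 1 b a⁻¹ := by
  have h := hc.2.2.2 a⁻¹ 1 a (a * b)
  rw [mul_one, inv_mul_cancel, inv_mul_cancel_left] at h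
  have h2 := cyc hc a⁻¹ 1 b
  omega

private lemma fc_cases (c : G → G → G → ℤ) (a b : G) : fc c a b = 0 ∨ fc c a b = 1 := by
  unfold fc; split <;> simp

variable {H : Subgroup G}

private lemma dConv_cases (c : G → G → G → ℤ) (H : Subgroup G) (h : G) :
    dConv c H h = 0 ∨ dConv c H h = 1 := by
  unfold dConv; split <;> simp

private lemma dval0 {h : G} (hx : h = 1 ∨ h ∈ posCone c H) : dConv c H h = 0 := by
  rw [dConv, if_pos hx]

private lemma dval1 {h : G} (h1 : h ≠ 1) (h2 : h ∉ posCone c H) : dConv c H h = 1 := by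
  rw [dConv, if_neg (by tauto)]

private lemma fc0 {a b : G} (h : c 1 a (a * b) = 1) : fc c a b = 0 := by
  rw [fc, if_pos (Or.inr (Or.inr h))]

private lemma fc1 {a b : G} (e1 : a ≠ 1) (e2 : b ≠ 1) (h : c 1 a (a * b) ≠ 1) :
    fc c a b = 1 := by
  rw [fc, if_neg (by tauto)]

variable (hc : IsCircularOrdering c)
variable (hconv : ∀ g : G, g ∉ H → ∀ f : G, ∀ h₁ ∈ H, ∀ h₂ ∈ H,
        c h₁ g h₂ = 1 → c h₂ f h₁ = 1 → f ∈ H)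

include hc hconv

private lemma posAll {h g' : G} (hh : h ∈ posCone c H) (hg' : g' ∉ H) : c 1 h g' = 1 := by
  obtain ⟨hH, g, hg, hcg⟩ := hh
  have hd := distinct hc hcg
  have h1 : (1 : G) ≠ g' := fun e => hg' (e ▸ H.one_mem)
  have h2 : h ≠ g' := fun e => hg' (e ▸ hH)
  rcases cne hc hd.1 h2 h1 with e | e
  · exact e
  · exfalso
    have e2 : c 1 g' h = 1 := by have := swap23 hc 1 h g'; omega
    have e3 : c h g 1 = 1 := by rw [cyc hc]; exact hcg
    exact hg' (hconv g hg g' h hH 1 H.one_mem e3 e2)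

private lemma inv_not_pos {a : G} (ha : a ∈ posCone c H) : a⁻¹ ∉ posCone c H := by
  intro hai
  obtain ⟨haH, g₀, hg₀, hw⟩ := ha
  have hg' : a⁻¹ * g₀ ∉ H := fun hm => hg₀ (by simpa using H.mul_mem haH hm)
  have h2 := posAll hc hconv hai hg'
  have h3 := hc.2.2.2 a⁻¹ 1 a g₀
  rw [mul_one, inv_mul_cancel] at h3
  have h5 := swap12 hc a⁻¹ 1 (a⁻¹ * g₀)
  omega

private lemma inv_pos_of_not {a : G} (haH : a ∈ H) (ha1 : a ≠ 1)
    (hnp : a ∉ posCone c H) {g₀ : G} (hg₀ : g₀ ∉ H) : a⁻¹ ∈ posCone c H := by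
  have n1 : (1 : G) ≠ a := fun e => ha1 e.symm
  have n2 : a ≠ g₀ := fun e => hg₀ (e ▸ haH)
  have n3 : (1 : G) ≠ g₀ := fun e => hg₀ (e ▸ H.one_mem)
  rcases cne hc n1 n2 n3 with e | e
  · exact absurd ⟨haH, g₀, hg₀, e⟩ hnp
  · have e2 : c 1 g₀ a = 1 := by have := swap23 hc 1 a g₀; omega
    have h3 := hc.2.2.2 a⁻¹ 1 g₀ a
    rw [mul_one, inv_mul_cancel] at h3
    have h4 : c 1 a⁻¹ (a⁻¹ * g₀) = 1 := by have := cyc hc 1 a⁻¹ (a⁻¹ * g₀); omega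
    exact ⟨H.inv_mem haH, a⁻¹ * g₀,
      fun hm => hg₀ (by simpa using H.mul_mem haH hm), h4⟩

private lemma pos_mul {a b : G} (ha : a ∈ posCone c H) (hb : b ∈ posCone c H) :
    a * b ∈ posCone c H := by
  obtain ⟨haH, g₀, hg₀, hw⟩ := ha
  have hbH := hb.1
  have hg' : a⁻¹ * g₀ ∉ H := fun hm => hg₀ (by simpa using H.mul_mem haH hm)
  have h2 := posAll hc hconv hb hg'
  have h3 := hc.2.2.2 a 1 b (a⁻¹ * g₀)
  rw [mul_one, mul_inv_cancel_left] at h3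
  have h4 : c g₀ 1 a = 1 := by have := cyc hc g₀ 1 a; omega
  have h5 : c g₀ a (a * b) = 1 := by have := cyc hc g₀ a (a * b); omega
  have h6 := ctrans hc g₀ 1 a (a * b) h4 h5
  have h7 : c 1 (a * b) g₀ = 1 := by have := cyc hc g₀ 1 (a * b); omega
  exact ⟨H.mul_mem haH hbH, g₀, hg₀, h7⟩

private lemma pbn {a b g₀ : G} (hg₀ : g₀ ∉ H) (ha : a ∈ posCone c H)
    (hbH : b ∈ H) (hb1 : b ≠ 1) (hb : b ∉ posCone c H) : c 1 a b = 1 := by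
  have h1 := posAll hc hconv ha hg₀
  have h2 : c 1 g₀ b = 1 := by
    have n1 : (1 : G) ≠ b := fun e => hb1 e.symm
    have n2 : b ≠ g₀ := fun e => hg₀ (e ▸ hbH)
    have n3 : (1 : G) ≠ g₀ := fun e => hg₀ (e ▸ H.one_mem)
    rcases cne hc n1 n2 n3 with e | e
    · exact absurd ⟨hbH, g₀, hg₀, e⟩ hb
    · have := swap23 hc 1 b g₀; omega
  exact ctrans hc 1 a g₀ b h1 h2

private lemma dmul {g₀ : G} (hg₀ : g₀ ∉ H) {h₁ h₂ : G} (m₁ : h₁ ∈ H) (m₂ : h₂ ∈ H) :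
    dConv c H (h₁ * h₂) = dConv c H h₁ + dConv c H h₂ - fc c h₁ h₂ := by
  by_cases e₁ : h₁ = 1
  · subst e₁
    have : fc c (1 : G) h₂ = 0 := by simp [fc]
    rw [one_mul, this, dval0 (Or.inl rfl)]
    ring
  by_cases e₂ : h₂ = 1
  · subst e₂
    have : fc c h₁ (1 : G) = 0 := by simp [fc]
    rw [mul_one, this, dval0 (Or.inl rfl)]
    ring
  by_cases e₃ : h₁ * h₂ = 1
  · have hb : h₂ = h₁⁻¹ := (inv_eq_of_mul_eq_one_right e₃).symm
    have hfc : fc c h₁ h₂ = 1 := by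
      refine fc1 e₁ e₂ ?_
      rw [e₃, deg hc (Or.inr (Or.inr rfl))]
      omega
    rw [e₃, dval0 (Or.inl rfl), hfc]
    by_cases p₁ : h₁ ∈ posCone c H
    · have hn : h₂ ∉ posCone c H := hb ▸ inv_not_pos hc hconv p₁
      rw [dval0 (Or.inr p₁), dval1 e₂ hn]; ring
    · have hn : h₂ ∈ posCone c H := hb ▸ inv_pos_of_not hc hconv m₁ e₁ p₁ hg₀
      rw [dval1 e₁ p₁, dval0 (Or.inr hn)]; ring
  · by_cases p₁ : h₁ ∈ posCone c H <;> by_cases p₂ : h₂ ∈ posCone c H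
    · -- both positive
      have hprod := pos_mul hc hconv p₁ p₂
      have hinv := inv_not_pos hc hconv p₁
      have hi1 : h₁⁻¹ ≠ 1 := inv_ne_one.mpr e₁
      have hf : c 1 h₂ h₁⁻¹ = 1 := pbn hc hconv hg₀ p₂ (H.inv_mem m₁) hi1 hinv
      have hfc : fc c h₁ h₂ = 0 := fc0 (by rw [fc_shift hc]; exact hf)
      rw [dval0 (Or.inr hprod), dval0 (Or.inr p₁), dval0 (Or.inr p₂), hfc]; ring
    · -- h₁ positive, h₂ negative
      by_cases pp : h₁ * h₂ ∈ posCone c H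
      · have hb2 : h₂⁻¹ ∈ posCone c H := inv_pos_of_not hc hconv m₂ e₂ p₂ hg₀
        have hpi : (h₁ * h₂)⁻¹ ∉ posCone c H := inv_not_pos hc hconv pp
        have t : c 1 h₂⁻¹ (h₁ * h₂)⁻¹ = 1 :=
          pbn hc hconv hg₀ hb2 (H.inv_mem (H.mul_mem m₁ m₂)) (inv_ne_one.mpr e₃) hpi
        rw [mul_inv_rev, fc_shift hc h₂⁻¹ h₁⁻¹, inv_inv] at t
        have t2 := swap23 hc 1 h₂ h₁⁻¹
        have hfc : fc c h₁ h₂ = 1 := fc1 e₁ e₂ (by rw [fc_shift hc]; omega)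
        rw [dval0 (Or.inr pp), dval0 (Or.inr p₁), dval1 e₂ p₂, hfc]; ring
      · have t : c 1 h₁ (h₁ * h₂) = 1 := pbn hc hconv hg₀ p₁ (H.mul_mem m₁ m₂) e₃ pp
        have hfc : fc c h₁ h₂ = 0 := fc0 t
        rw [dval1 e₃ pp, dval0 (Or.inr p₁), dval1 e₂ p₂, hfc]
        ring
    · -- h₁ negative, h₂ positive
      by_cases pp : h₁ * h₂ ∈ posCone c H
      · have t : c 1 (h₁ * h₂) h₁ = 1 := pbn hc hconv hg₀ pp m₁ e₁ p₁
        have t2 := swap23 hc 1 h₁ (h₁ * h₂)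
        have hfc : fc c h₁ h₂ = 1 := fc1 e₁ e₂ (by omega)
        rw [dval0 (Or.inr pp), dval1 e₁ p₁, dval0 (Or.inr p₂), hfc]; ring
      · have a1 : (h₁ * h₂)⁻¹ ∈ posCone c H :=
          inv_pos_of_not hc hconv (H.mul_mem m₁ m₂) e₃ pp hg₀
        have b1 : h₂⁻¹ ∉ posCone c H := inv_not_pos hc hconv p₂
        have t : c 1 (h₁ * h₂)⁻¹ h₂⁻¹ = 1 :=
          pbn hc hconv hg₀ a1 (H.inv_mem m₂) (inv_ne_one.mpr e₂) b1
        have e : h₂⁻¹ = (h₁ * h₂)⁻¹ * h₁ := by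
          rw [mul_inv_rev, inv_mul_cancel_right]
        rw [e, fc_shift hc, inv_inv] at t
        have hfc : fc c h₁ h₂ = 0 := fc0 t
        rw [dval1 e₃ pp, dval1 e₁ p₁, dval0 (Or.inr p₂), hfc]
        ring
    · -- both negative
      have i1 : h₁⁻¹ ∈ posCone c H := inv_pos_of_not hc hconv m₁ e₁ p₁ hg₀
      have i2 : h₂⁻¹ ∈ posCone c H := inv_pos_of_not hc hconv m₂ e₂ p₂ hg₀
      have i3 : h₂⁻¹ * h₁⁻¹ ∈ posCone c H := pos_mul hc hconv i2 i1
      have i4 : (h₁ * h₂)⁻¹ ∈ posCone c H := by rw [mul_inv_rev]; exact i3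
      have pp : h₁ * h₂ ∉ posCone c H := by
        have := inv_not_pos hc hconv i4
        rwa [inv_inv] at this
      have t : c 1 h₁⁻¹ h₂ = 1 := pbn hc hconv hg₀ i1 m₂ e₂ p₂
      have t2 := swap23 hc 1 h₂ h₁⁻¹
      have hfc : fc c h₁ h₂ = 1 := fc1 e₁ e₂ (by rw [fc_shift hc]; omega)
      rw [dval1 e₃ pp, dval1 e₁ p₁, dval1 e₂ p₂, hfc]
      ring

end Stmt16Aux


/-- The embedding `ι(h) = (-d(h), h)` of a proper convex subgroup `H ⊂ (G,c)` into the lift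
`G̃` is an injective homomorphism whose image is a convex subgroup of `(G̃, <_c)`. -/
theorem stmt16 {G : Type*} [Group G] (c : G → G → G → ℤ) (hc : IsCircularOrdering c)
    (H : Subgroup G) (hproper : H ≠ ⊤)
    (hconv : ∀ g : G, g ∉ H → ∀ f : G, ∀ h₁ ∈ H, ∀ h₂ ∈ H,
        c h₁ g h₂ = 1 → c h₂ f h₁ = 1 → f ∈ H) :
    (∀ h₁ ∈ H, ∀ h₂ ∈ H,
      ((-(dConv c H (h₁ * h₂)) : ℤ), h₁ * h₂) =
        mulT c ((-(dConv c H h₁) : ℤ), h₁) ((-(dConv c H h₂) : ℤ), h₂)) ∧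
    (∀ h₁ h₂ : G, ((-(dConv c H h₁) : ℤ), h₁) = ((-(dConv c H h₂) : ℤ), h₂) → h₁ = h₂) ∧
    (∀ h ∈ H, ∀ p : ℤ × G,
      ltT c ((0 : ℤ), (1 : G)) p → ltT c p ((-(dConv c H h) : ℤ), h) →
        ∃ h' ∈ H, p = ((-(dConv c H h') : ℤ), h')) := by
  obtain ⟨g₀, hg₀⟩ : ∃ g : G, g ∉ H := by
    by_contra hall
    push_neg at hall
    exact hproper ((Subgroup.eq_top_iff' H).mpr hall)
  refine ⟨?_, ?_, ?_⟩
  · intro h₁ m₁ h₂ m₂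
    have key := dmul hc hconv hg₀ m₁ m₂
    simp only [mulT, Prod.mk.injEq]
    exact ⟨by omega, trivial⟩
  · intro h₁ h₂ h
    simpa using congrArg Prod.snd h
  · intro h hH p hp1 hp2
    obtain ⟨n, a⟩ := p
    simp only [ltT, mulT, invT, posT, Set.mem_setOf_eq] at hp1 hp2
    have hd0 := dConv_cases c H h
    have hfc_h := fc_cases c ((n, a) : ℤ × G).2⁻¹ h
    have hfc_a := fc_cases c ((n, a) : ℤ × G).2 (((n, a) : ℤ × G).2)⁻¹
    simp only at hp1 hp2 hfc_h hfc_a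
    have ha1 : a ≠ 1 := by
      intro e
      subst e
      have f1 : fc c ((1 : G))⁻¹ h = 0 := by simp [fc]
      have f2 : fc c (1 : G) (1 : G)⁻¹ = 0 := by simp [fc]
      have hne : n ≠ 0 := by
        intro e0
        exact hp1.2 (by simp [e0, fc])
      have h1 := hp1.1
      have h2 := hp2.1
      simp only [fc] at h1
      simp at h1
      rw [f1, f2] at h2
      omega
    have hfa : fc c a a⁻¹ = 1 := by
      rw [fc, if_neg]
      push_neg
      refine ⟨ha1, inv_ne_one.mpr ha1, ?_⟩
      rw [mul_inv_cancel, deg hc (Or.inr (Or.inr rfl))]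
      omega
    have h1' : 0 ≤ n := by
      have := hp1.1
      simp only [fc] at this
      simp at this
      omega
    have h2' := hp2.1
    rw [hfa] at h2'
    have hn : n = 0 := by omega
    have hdh : dConv c H h = 0 := by omega
    have hfc1 : fc c a⁻¹ h = 1 := by omega
    have hh1 : h ≠ 1 := by
      intro e
      subst e
      simp [fc] at hfc1
    have hpos : h ∈ posCone c H := by
      by_contra hq
      rw [dval1 hh1 hq] at hdh
      omega
    by_cases hha : h = a
    · subst hha
      refine ⟨h, hH, ?_⟩
      rw [hn, dval0 (Or.inr hpos)]
      norm_num
    · have hcond : ¬(a⁻¹ = 1 ∨ h = 1 ∨ c 1 a⁻¹ (a⁻¹ * h) = 1) := by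
        intro hcnd
        rw [fc, if_pos hcnd] at hfc1
        omega
      push_neg at hcond
      obtain ⟨_, _, hc3⟩ := hcond
      have n1 : (1 : G) ≠ a⁻¹ := fun e => (inv_ne_one.mpr ha1) e.symm
      have n2 : a⁻¹ ≠ a⁻¹ * h := fun e => hh1 (left_eq_mul.mp e)
      have n3 : (1 : G) ≠ a⁻¹ * h := fun e => hha (inv_mul_eq_one.mp e.symm).symm
      have hdist := cne hc n1 n2 n3
      have hm1 : c 1 (a⁻¹ * h) a⁻¹ = 1 := by
        have := swap23 hc 1 a⁻¹ (a⁻¹ * h); omega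
      have ht := hc.2.2.2 a 1 (a⁻¹ * h) a⁻¹
      rw [mul_one, mul_inv_cancel_left, mul_inv_cancel] at ht
      have hch : c 1 a h = 1 := by have := cyc hc 1 a h; omega
      have hg1 : c h g₀ 1 = 1 := by
        rw [cyc hc]
        exact posAll hc hconv hpos hg₀
      have haH : a ∈ H := hconv g₀ hg₀ a h hH 1 H.one_mem hg1 hch
      have hapos : a ∈ posCone c H :=
        ⟨haH, g₀, hg₀, ctrans hc 1 a h g₀ hch (posAll hc hconv hpos hg₀)⟩
      refine ⟨a, haH, ?_⟩
      rw [hn, dval0 (Or.inr hapos)]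
      norm_num
end
end
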